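/- arXiv:2209.00598 — 3 statements merged into one kernel-verified Lean document; each statement's English description precedes it below -/
import Mathlib

section
/- Let (X, ‖·‖) be a real normed vector space and let u, v ∈ X be distinct. The following are equivalent: (1) there are at least two distinct geodesics from u to v; (2) there is an uncountable family of pairwise-disjoint geodesics from u to v; (3) there exist C ∈ (0,1) and distinct x, y ∈ X such that ‖x − u‖ = ‖y − u‖ = C·‖u − v‖ and ‖v − x‖ = ‖v − y‖ = (1 − C)·‖u − v‖. -/
/-!
A geodesic from `u` to `v` passes at time `t` through a point at distance `t‖u - v‖` from `u`
and `(1 - t)‖u - v‖` from `v`; two distinct geodesics differ at some `t ∈ (0, 1)`, giving two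
such points. Conversely, for fixed `C` these points form the intersection of two closed balls,
a convex set, so with two of them it contains the whole segment between them. Through each
point `p` of the segment runs the broken geodesic `u → p → v` with corner at time `C`. Two of
them can only meet at `u` or `v`: a point of a geodesic determines its time, and at a time in
`(0, 1)` the broken geodesic determines its corner.
-/

/-- A geodesic from `u` to `v` in a metric space `X`: a map `γ : [0,1] → X` with
`γ 0 = u`, `γ 1 = v` and `d(γ s, γ t) = |s - t| * d(u,v)` for all `s, t ∈ [0,1]`. -/
def IsGeodesic {X : Type*} [MetricSpace X] (u v : X) (γ : unitInterval → X) : Prop :=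
  γ 0 = u ∧ γ 1 = v ∧
    ∀ s t : unitInterval, dist (γ s) (γ t) = |(s : ℝ) - (t : ℝ)| * dist u v

/-- Two geodesics from `u` to `v` are disjoint if their images intersect only at
points in `{u, v}`. -/
def DisjointGeodesics {X : Type*} [MetricSpace X] (u v : X)
    (γ σ : unitInterval → X) : Prop :=
  ∀ w z : unitInterval, γ w = σ z → γ w = u ∨ γ w = v

open AffineMap Metric Set

section MetricSpace

variable {X : Type*} [MetricSpace X] {u v : X}

def IsIntermediatePoint (u v : X) (C : ℝ) (p : X) : Prop :=
  dist p u = C * dist u v ∧ dist v p = (1 - C) * dist u v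

lemma isIntermediatePoint_of_dist_le {C : ℝ} {p : X} (hpu : dist p u ≤ C * dist u v)
    (hpv : dist v p ≤ (1 - C) * dist u v) : IsIntermediatePoint u v C p := by
  have := dist_triangle u p v
  rw [dist_comm u p, dist_comm p v] at this
  constructor <;> linarith

variable {γ σ : unitInterval → X}

lemma isGeodesic_of_dist_le (h0 : γ 0 = u) (h1 : γ 1 = v)
    (h : ∀ s t : unitInterval, dist (γ s) (γ t) ≤ |(s : ℝ) - t| * dist u v) :
    IsGeodesic u v γ := by
  refine ⟨h0, h1, fun s t ↦ ?_⟩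
  wlog hst : (s : ℝ) ≤ t generalizing s t
  · rw [dist_comm, abs_sub_comm]
    exact this t s (le_of_not_ge hst)
  have hs := h s 0
  have ht := h 1 t
  have hst' := h s t
  simp only [h0, h1, Set.Icc.coe_zero, Set.Icc.coe_one, sub_zero] at hs ht
  rw [abs_of_nonneg s.2.1] at hs
  rw [abs_of_nonneg (sub_nonneg.2 t.2.2)] at ht
  rw [abs_of_nonpos (sub_nonpos.2 hst)] at hst' ⊢
  have := dist_triangle4 u (γ s) (γ t) v
  rw [dist_comm u (γ s), dist_comm (γ t) v] at this
  linarith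

lemma IsGeodesic.isIntermediatePoint (hγ : IsGeodesic u v γ) (t : unitInterval) :
    IsIntermediatePoint u v t (γ t) := by
  constructor
  · simpa [hγ.1, abs_of_nonneg t.2.1] using hγ.2.2 t 0
  · simpa [hγ.2.1, abs_of_nonneg (sub_nonneg.2 t.2.2)] using hγ.2.2 1 t

lemma IsGeodesic.eq_of_apply_eq (hγ : IsGeodesic u v γ) (hσ : IsGeodesic u v σ) (huv : u ≠ v)
    {s t : unitInterval} (h : γ s = σ t) : s = t := by
  have hs := (hγ.isIntermediatePoint s).1
  rw [h, (hσ.isIntermediatePoint t).1] at hs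
  exact Subtype.ext (mul_right_cancel₀ (dist_ne_zero.2 huv) hs).symm

end MetricSpace

lemma isIntermediatePoint_iff_norm {X : Type*} [NormedAddCommGroup X] {u v p : X} {C : ℝ} :
    IsIntermediatePoint u v C p ↔ ‖p - u‖ = C * ‖u - v‖ ∧ ‖v - p‖ = (1 - C) * ‖u - v‖ := by
  simp only [IsIntermediatePoint, dist_eq_norm]

section NormedSpace

variable {X : Type*} [NormedAddCommGroup X] [NormedSpace ℝ X] {u p q v : X} {C s t : ℝ}

lemma convex_setOf_isIntermediatePoint : Convex ℝ {p : X | IsIntermediatePoint u v C p} := by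
  convert (convex_closedBall u (C * dist u v)).inter (convex_closedBall v ((1 - C) * dist u v))
    using 1
  ext p
  refine ⟨fun hp ↦ ⟨mem_closedBall.2 hp.1.le, mem_closedBall'.2 hp.2.le⟩,
    fun hp ↦ isIntermediatePoint_of_dist_le (mem_closedBall.1 hp.1) (mem_closedBall'.1 hp.2)⟩

lemma not_countable_segment {x y : X} (hxy : x ≠ y) : ¬ (segment ℝ x y).Countable := by
  rw [segment_eq_image_lineMap]
  intro h
  have := (mapsTo_image _ _).countable_of_injOn (lineMap_injective ℝ hxy).injOn h
  rw [Cardinal.Real.Icc_countable_iff] at this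
  exact zero_lt_one.not_ge this

noncomputable def brokenPath (u p v : X) (C t : ℝ) : X :=
  if t ≤ C then lineMap u p (t / C) else lineMap p v ((t - C) / (1 - C))

lemma brokenPath_of_le (ht : t ≤ C) : brokenPath u p v C t = lineMap u p (t / C) := if_pos ht

lemma brokenPath_of_ge (hC : C ≠ 0) (ht : C ≤ t) :
    brokenPath u p v C t = lineMap p v ((t - C) / (1 - C)) := by
  rcases ht.lt_or_eq with ht | rfl
  · exact if_neg ht.not_ge
  · simp [brokenPath, hC]

lemma brokenPath_self (hC : C ≠ 0) : brokenPath u p v C C = p := by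
  simp [brokenPath_of_le le_rfl, hC]

lemma dist_brokenPath_of_le (hC : 0 < C) (hpu : dist p u = C * dist u v) (hs : s ≤ C)
    (ht : t ≤ C) :
    dist (brokenPath u p v C s) (brokenPath u p v C t) = |s - t| * dist u v := by
  rw [brokenPath_of_le hs, brokenPath_of_le ht, dist_lineMap_lineMap, dist_comm u p, hpu,
    Real.dist_eq, ← sub_div, abs_div, abs_of_pos hC]
  field_simp

lemma dist_brokenPath_of_ge (hC : C ∈ Ioo 0 1) (hpv : dist v p = (1 - C) * dist u v)
    (hs : C ≤ s) (ht : C ≤ t) :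
    dist (brokenPath u p v C s) (brokenPath u p v C t) = |s - t| * dist u v := by
  have h1C : 0 < 1 - C := sub_pos.2 hC.2
  rw [brokenPath_of_ge hC.1.ne' hs, brokenPath_of_ge hC.1.ne' ht, dist_lineMap_lineMap,
    dist_comm p v, hpv, Real.dist_eq, ← sub_div, abs_div, abs_of_pos h1C,
    sub_sub_sub_cancel_right]
  field_simp

lemma dist_brokenPath_le (hC : C ∈ Ioo 0 1) (hp : IsIntermediatePoint u v C p) (s t : ℝ) :
    dist (brokenPath u p v C s) (brokenPath u p v C t) ≤ |s - t| * dist u v := by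
  wlog hst : s ≤ t generalizing s t
  · rw [dist_comm, abs_sub_comm]
    exact this t s (le_of_not_ge hst)
  rcases le_total t C with htC | hCt
  · exact (dist_brokenPath_of_le hC.1 hp.1 (hst.trans htC) htC).le
  rcases le_total C s with hCs | hsC
  · exact (dist_brokenPath_of_ge hC hp.2 hCs hCt).le
  calc dist (brokenPath u p v C s) (brokenPath u p v C t)
      ≤ dist (brokenPath u p v C s) (brokenPath u p v C C)
        + dist (brokenPath u p v C C) (brokenPath u p v C t) := dist_triangle _ _ _
    _ = |s - C| * dist u v + |C - t| * dist u v := by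
      rw [dist_brokenPath_of_le hC.1 hp.1 hsC le_rfl, dist_brokenPath_of_ge hC hp.2 le_rfl hCt]
    _ = |s - t| * dist u v := by
      rw [abs_of_nonpos (sub_nonpos.2 hsC), abs_of_nonpos (sub_nonpos.2 hCt),
        abs_of_nonpos (sub_nonpos.2 hst)]
      ring

lemma isGeodesic_brokenPath (hC : C ∈ Ioo 0 1) (hp : IsIntermediatePoint u v C p) :
    IsGeodesic u v (fun t : unitInterval ↦ brokenPath u p v C t) :=
  isGeodesic_of_dist_le (by simp [brokenPath_of_le hC.1.le])
    (by simp [brokenPath_of_ge hC.1.ne' hC.2.le, (sub_pos.2 hC.2).ne'])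
    fun s t ↦ dist_brokenPath_le hC hp s t

lemma brokenPath_injective (hC : C ∈ Ioo 0 1) (ht : t ∈ Ioo 0 1) :
    Function.Injective fun p ↦ brokenPath u p v C t := by
  intro p q h
  rcases le_total t C with htC | hCt
  · simp only [brokenPath_of_le htC, ← homothety_eq_lineMap] at h
    exact homothety_injective u (div_ne_zero ht.1.ne' hC.1.ne') h
  · have hc : 1 - (t - C) / (1 - C) ≠ 0 :=
      sub_ne_zero.2 ((div_lt_one (sub_pos.2 hC.2)).2 (by linarith [ht.2])).ne'
    simp only [brokenPath_of_ge hC.1.ne' hCt, ← lineMap_apply_one_sub v,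
      ← homothety_eq_lineMap] at h
    exact homothety_injective v hc h

lemma disjointGeodesics_brokenPath (huv : u ≠ v) (hC : C ∈ Ioo 0 1)
    (hp : IsIntermediatePoint u v C p) (hq : IsIntermediatePoint u v C q) (hpq : p ≠ q) :
    DisjointGeodesics u v (fun t : unitInterval ↦ brokenPath u p v C t)
      (fun t : unitInterval ↦ brokenPath u q v C t) := by
  intro w z hwz
  have hgp := isGeodesic_brokenPath hC hp
  obtain rfl := hgp.eq_of_apply_eq (isGeodesic_brokenPath hC hq) huv hwz
  by_contra! hw
  have hw0 : w ≠ 0 := by rintro rfl; exact hw.1 hgp.1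
  have hw1 : w ≠ 1 := by rintro rfl; exact hw.2 hgp.2.1
  exact hpq (brokenPath_injective hC
    ⟨unitInterval.pos_iff_ne_zero.2 hw0, unitInterval.lt_one_iff_ne_one.2 hw1⟩ hwz)

end NormedSpace

theorem statement3 {X : Type*} [NormedAddCommGroup X] [NormedSpace ℝ X]
    (u v : X) (huv : u ≠ v) :
    List.TFAE [
      -- (1) at least two distinct geodesics from u to v
      ∃ γ σ : unitInterval → X, IsGeodesic u v γ ∧ IsGeodesic u v σ ∧ γ ≠ σ,
      -- (2) an uncountable family of pairwise-disjoint geodesics from u to v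
      ∃ S : Set (unitInterval → X), ¬ S.Countable ∧ (∀ γ ∈ S, IsGeodesic u v γ) ∧
        S.Pairwise (DisjointGeodesics u v),
      -- (3) existence of two distinct "intermediate" points
      ∃ C ∈ Set.Ioo (0 : ℝ) 1, ∃ x y : X, x ≠ y ∧
        ‖x - u‖ = C * ‖u - v‖ ∧ ‖y - u‖ = C * ‖u - v‖ ∧
        ‖v - x‖ = (1 - C) * ‖u - v‖ ∧ ‖v - y‖ = (1 - C) * ‖u - v‖] := by
  tfae_have 1 → 3 := by
    rintro ⟨γ, σ, hγ, hσ, hne⟩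
    obtain ⟨t, ht⟩ := Function.ne_iff.1 hne
    have ht0 : t ≠ 0 := fun h ↦ ht (by rw [h, hγ.1, hσ.1])
    have ht1 : t ≠ 1 := fun h ↦ ht (by rw [h, hγ.2.1, hσ.2.1])
    obtain ⟨hxu, hvx⟩ := isIntermediatePoint_iff_norm.1 (hγ.isIntermediatePoint t)
    obtain ⟨hyu, hvy⟩ := isIntermediatePoint_iff_norm.1 (hσ.isIntermediatePoint t)
    exact ⟨t, ⟨unitInterval.pos_iff_ne_zero.2 ht0, unitInterval.lt_one_iff_ne_one.2 ht1⟩,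
      γ t, σ t, ht, hxu, hyu, hvx, hvy⟩
  tfae_have 3 → 2 := by
    rintro ⟨C, hC, x, y, hxy, hxu, hyu, hvx, hvy⟩
    have hseg : segment ℝ x y ⊆ {p | IsIntermediatePoint u v C p} :=
      convex_setOf_isIntermediatePoint.segment_subset
        (isIntermediatePoint_iff_norm.2 ⟨hxu, hvx⟩) (isIntermediatePoint_iff_norm.2 ⟨hyu, hvy⟩)
    set G : X → unitInterval → X := fun p t ↦ brokenPath u p v C t
    have hG : G.Injective := fun p q h ↦ by
      simpa [G, brokenPath_self hC.1.ne'] using congrFun h ⟨C, hC.1.le, hC.2.le⟩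
    refine ⟨G '' segment ℝ x y,
      fun h ↦ not_countable_segment hxy ((mapsTo_image _ _).countable_of_injOn hG.injOn h), ?_, ?_⟩
    · rintro _ ⟨p, hp, rfl⟩
      exact isGeodesic_brokenPath hC (hseg hp)
    · rintro _ ⟨p, hp, rfl⟩ _ ⟨q, hq, rfl⟩ hne
      exact disjointGeodesics_brokenPath huv hC (hseg hp) (hseg hq) (ne_of_apply_ne G hne)
  tfae_have 2 → 1 := by
    rintro ⟨S, hS, hgeo, -⟩
    obtain ⟨γ, hγ, σ, hσ, hne⟩ := Set.not_subsingleton_iff.1 (mt Subsingleton.countable hS)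
    exact ⟨γ, σ, hgeo γ hγ, hgeo σ hσ, hne⟩
  tfae_finish
end

section
/- Let (X, ‖·‖) be a real normed vector space. The following are equivalent: (1) X is multigeodesic; (2) between any two distinct points of X there is an uncountable family of pairwise-disjoint geodesics; (3) for every x ∈ X with ‖x‖ = 1 there exist C ∈ (0,1) and y ∈ X with y ≠ C·x such that ‖y‖ = C and ‖x − y‖ = 1 − C. -/
/-- A metric space is multigeodesic if between any two distinct points there are
at least two distinct geodesics. -/
def Multigeodesic (X : Type*) [MetricSpace X] : Prop :=
  ∀ u v : X, u ≠ v → ∃ γ σ : unitInterval → X,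
    IsGeodesic u v γ ∧ IsGeodesic u v σ ∧ γ ≠ σ

/-! The geodesics from `u` to `v` in a normed space form a convex set, and two of them that
meet only at the endpoints span, by convex combination, a continuum of pairwise disjoint ones.
Such a pair exists as soon as some point `p` lies metrically between `u` and `v`,
`d(u,p) = C d(u,v)` and `d(p,v) = (1 - C) d(u,v)`, without being the affine point
`u + C (v - u)`: the broken line `u → p → v` is then a geodesic meeting the segment only at
its ends. Conversely two distinct geodesics must differ at some time `s ∈ (0,1)`, and one of
their positions at time `s` is such a point; condition (3) is the same statement after
translating and rescaling. -/

open Set AffineMap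

namespace IsGeodesic

variable {X : Type*} [MetricSpace X] {u v : X} {γ σ : unitInterval → X}

theorem of_dist_le (h0 : γ 0 = u) (h1 : γ 1 = v)
    (hle : ∀ s t : unitInterval, (s : ℝ) ≤ t → dist (γ s) (γ t) ≤ ((t : ℝ) - s) * dist u v) :
    IsGeodesic u v γ := by
  have heq : ∀ s t : unitInterval, (s : ℝ) ≤ t →
      dist (γ s) (γ t) = ((t : ℝ) - s) * dist u v := by
    intro s t hst
    refine le_antisymm (hle s t hst) ?_
    have hus : dist u (γ s) ≤ s * dist u v := by simpa [h0] using hle 0 s s.2.1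
    have htv : dist (γ t) v ≤ (1 - t) * dist u v := by simpa [h1] using hle t 1 t.2.2
    linarith [dist_triangle4 u (γ s) (γ t) v]
  refine ⟨h0, h1, fun s t => ?_⟩
  rcases le_total (s : ℝ) t with hst | hts
  · rw [heq s t hst, abs_of_nonpos (sub_nonpos.2 hst), neg_sub]
  · rw [dist_comm, heq t s hts, abs_of_nonneg (sub_nonneg.2 hts)]

theorem dist_left (hγ : IsGeodesic u v γ) (t : unitInterval) :
    dist u (γ t) = t * dist u v := by
  simpa [hγ.1, abs_of_nonneg t.2.1] using hγ.2.2 0 t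

theorem dist_right (hγ : IsGeodesic u v γ) (t : unitInterval) :
    dist (γ t) v = (1 - t) * dist u v := by
  simpa [hγ.2.1, abs_of_nonpos (sub_nonpos.2 t.2.2)] using hγ.2.2 t 1

theorem eq_of_apply_eq_s4 (hγ : IsGeodesic u v γ) (hσ : IsGeodesic u v σ) (huv : u ≠ v)
    {s t : unitInterval} (h : γ s = σ t) : s = t := by
  have hs := hγ.dist_left s
  rw [h, hσ.dist_left t] at hs
  exact Subtype.ext (mul_right_cancel₀ (dist_ne_zero.2 huv) hs).symm

theorem exists_apply_ne (hγ : IsGeodesic u v γ) (hσ : IsGeodesic u v σ) (hne : γ ≠ σ) :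
    ∃ s : unitInterval, (s : ℝ) ∈ Ioo 0 1 ∧ γ s ≠ σ s := by
  obtain ⟨s, hs⟩ := Function.ne_iff.1 hne
  refine ⟨s, ⟨unitInterval.pos_iff_ne_zero.2 ?_, unitInterval.lt_one_iff_ne_one.2 ?_⟩, hs⟩
  · rintro rfl
    exact hs (hγ.1.trans hσ.1.symm)
  · rintro rfl
    exact hs (hγ.2.1.trans hσ.2.1.symm)

theorem ne_of_disjointGeodesics (hγ : IsGeodesic u v γ) (huv : u ≠ v)
    (h : DisjointGeodesics u v γ σ) : γ ≠ σ := by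
  rintro rfl
  let w : unitInterval := ⟨1 / 2, by norm_num, by norm_num⟩
  rcases h w w rfl with hu | hv
  · have := hγ.eq_of_apply_eq_s4 hγ huv (hu.trans hγ.1.symm)
    norm_num [w, Subtype.ext_iff] at this
  · have := hγ.eq_of_apply_eq_s4 hγ huv (hv.trans hγ.2.1.symm)
    norm_num [w, Subtype.ext_iff] at this

end IsGeodesic

section NormedSpace

variable {E : Type*} [NormedAddCommGroup E] [NormedSpace ℝ E] {u p v : E}
  {γ σ : unitInterval → E} {C : ℝ}

theorem isGeodesic_lineMap (u v : E) : IsGeodesic u v (fun t => lineMap u v (t : ℝ)) := by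
  refine ⟨by simp, by simp, fun s t => ?_⟩
  rw [dist_lineMap_lineMap, Real.dist_eq]

theorem IsGeodesic.lineMap (hγ : IsGeodesic u v γ) (hσ : IsGeodesic u v σ) {r : ℝ}
    (hr : r ∈ Icc (0 : ℝ) 1) : IsGeodesic u v (fun t => AffineMap.lineMap (γ t) (σ t) r) := by
  refine .of_dist_le (by simp [hγ.1, hσ.1]) (by simp [hγ.2.1, hσ.2.1]) fun s t hst => ?_
  calc dist (AffineMap.lineMap (γ s) (σ s) r) (AffineMap.lineMap (γ t) (σ t) r)
      = ‖(1 - r) • (γ s - γ t) + r • (σ s - σ t)‖ := by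
        rw [dist_eq_norm, lineMap_apply_module, lineMap_apply_module]
        congr 1
        module
    _ ≤ (1 - r) * dist (γ s) (γ t) + r * dist (σ s) (σ t) := by
        refine (norm_add_le _ _).trans_eq ?_
        rw [norm_smul, norm_smul, Real.norm_of_nonneg (sub_nonneg.2 hr.2),
          Real.norm_of_nonneg hr.1, dist_eq_norm, dist_eq_norm]
    _ = (t - s) * dist u v := by
        rw [hγ.2.2, hσ.2.2, abs_of_nonpos (sub_nonpos.2 hst)]
        ring

noncomputable def brokenLine (u p v : E) (C t : ℝ) : E :=
  if t ≤ C then lineMap u p (t / C) else lineMap p v ((t - C) / (1 - C))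

theorem brokenLine_of_le {t : ℝ} (ht : t ≤ C) : brokenLine u p v C t = lineMap u p (t / C) :=
  if_pos ht

theorem brokenLine_of_ge (hC : 0 < C) {t : ℝ} (ht : C ≤ t) :
    brokenLine u p v C t = lineMap p v ((t - C) / (1 - C)) := by
  rcases ht.eq_or_lt with rfl | ht
  · simp [brokenLine, hC.ne']
  · exact if_neg ht.not_ge

theorem dist_brokenLine_le (hC : C ∈ Ioo 0 1) (hup : dist u p = C * dist u v)
    (hpv : dist p v = (1 - C) * dist u v) {s t : ℝ} (hst : s ≤ t) :
    dist (brokenLine u p v C s) (brokenLine u p v C t) ≤ (t - s) * dist u v := by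
  obtain ⟨hC0, hC1⟩ := hC
  have first_piece {s t : ℝ} (hst : s ≤ t) (htC : t ≤ C) :
      dist (brokenLine u p v C s) (brokenLine u p v C t) = (t - s) * dist u v := by
    rw [brokenLine_of_le (hst.trans htC), brokenLine_of_le htC, dist_lineMap_lineMap, hup,
      Real.dist_eq, ← sub_div, abs_div, abs_of_nonpos (sub_nonpos.2 hst), abs_of_pos hC0]
    field_simp
    ring
  have second_piece {s t : ℝ} (hCs : C ≤ s) (hst : s ≤ t) :
      dist (brokenLine u p v C s) (brokenLine u p v C t) = (t - s) * dist u v := by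
    rw [brokenLine_of_ge hC0 hCs, brokenLine_of_ge hC0 (hCs.trans hst), dist_lineMap_lineMap,
      hpv, Real.dist_eq, ← sub_div, abs_div, abs_of_nonpos (by linarith),
      abs_of_pos (sub_pos.2 hC1)]
    field_simp
    ring
  rcases le_total t C with htC | hCt
  · exact (first_piece hst htC).le
  rcases le_total C s with hCs | hsC
  · exact (second_piece hCs hst).le
  calc dist (brokenLine u p v C s) (brokenLine u p v C t)
      ≤ dist (brokenLine u p v C s) (brokenLine u p v C C)
        + dist (brokenLine u p v C C) (brokenLine u p v C t) := dist_triangle _ _ _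
    _ = (t - s) * dist u v := by
        rw [first_piece hsC le_rfl, second_piece le_rfl hCt]
        ring

theorem isGeodesic_brokenLine (hC : C ∈ Ioo 0 1) (hup : dist u p = C * dist u v)
    (hpv : dist p v = (1 - C) * dist u v) :
    IsGeodesic u v (fun t => brokenLine u p v C t) :=
  .of_dist_le (by simp [brokenLine_of_le hC.1.le])
    (by simp [brokenLine_of_ge hC.1 hC.2.le, div_self (sub_ne_zero.2 hC.2.ne')])
    fun _ _ hst => dist_brokenLine_le hC hup hpv hst

theorem brokenLine_ne_lineMap (hC : C ∈ Ioo 0 1) (hp : p ≠ lineMap u v C) {t : ℝ}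
    (ht : t ∈ Ioo 0 1) : brokenLine u p v C t ≠ lineMap u v t := by
  obtain ⟨hC0, hC1⟩ := hC
  rw [← sub_ne_zero]
  rcases le_total t C with htC | hCt
  · have h : brokenLine u p v C t - lineMap u v t = (t / C) • (p - lineMap u v C) := by
      rw [brokenLine_of_le htC]
      simp only [lineMap_apply_module]
      match_scalars <;> field_simp
      ring
    rw [h]
    exact smul_ne_zero (div_pos ht.1 hC0).ne' (sub_ne_zero.2 hp)
  · have h : brokenLine u p v C t - lineMap u v t
        = ((1 - t) / (1 - C)) • (p - lineMap u v C) := by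
      rw [brokenLine_of_ge hC0 hCt]
      simp only [lineMap_apply_module]
      have : 1 - C ≠ 0 := sub_ne_zero.2 hC1.ne'
      match_scalars <;> field_simp <;> ring
    rw [h]
    exact smul_ne_zero (div_pos (sub_pos.2 ht.2) (sub_pos.2 hC1)).ne' (sub_ne_zero.2 hp)

theorem disjointGeodesics_lineMap_brokenLine (hC : C ∈ Ioo 0 1)
    (hup : dist u p = C * dist u v) (hpv : dist p v = (1 - C) * dist u v)
    (hp : p ≠ lineMap u v C) (huv : u ≠ v) :
    DisjointGeodesics u v (fun t => lineMap u v (t : ℝ)) (fun t => brokenLine u p v C t) := by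
  intro w z hwz
  obtain rfl := (isGeodesic_lineMap u v).eq_of_apply_eq_s4 (isGeodesic_brokenLine hC hup hpv) huv hwz
  rcases eq_or_ne w 0 with rfl | hw0
  · simp
  rcases eq_or_ne w 1 with rfl | hw1
  · simp
  exact absurd hwz.symm (brokenLine_ne_lineMap hC hp
    ⟨unitInterval.pos_iff_ne_zero.2 hw0, unitInterval.lt_one_iff_ne_one.2 hw1⟩)

theorem DisjointGeodesics.exists_uncountable_pairwise (hγ : IsGeodesic u v γ)
    (hσ : IsGeodesic u v σ) (huv : u ≠ v) (h : DisjointGeodesics u v γ σ) :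
    ∃ S : Set (unitInterval → E), ¬ S.Countable ∧ (∀ τ ∈ S, IsGeodesic u v τ) ∧
      S.Pairwise (DisjointGeodesics u v) := by
  set F : ℝ → unitInterval → E := fun r t => lineMap (γ t) (σ t) r
  obtain ⟨t₀, ht₀⟩ := Function.ne_iff.1 (hγ.ne_of_disjointGeodesics huv h)
  have hinj : InjOn F (Icc 0 1) := fun r _ r' _ hrr' =>
    lineMap_injective ℝ ht₀ (congrFun hrr' t₀)
  refine ⟨F '' Icc 0 1, fun hS => ?_, ?_, ?_⟩
  · have := countable_of_injective_of_countable_image hinj hS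
    rw [Cardinal.Real.Icc_countable_iff] at this
    norm_num at this
  · rintro _ ⟨r, hr, rfl⟩
    exact hγ.lineMap hσ hr
  · rintro _ ⟨r, hr, rfl⟩ _ ⟨r', hr', rfl⟩ hne w z hwz
    obtain rfl := (hγ.lineMap hσ hr).eq_of_apply_eq_s4 (hγ.lineMap hσ hr') huv hwz
    have hγσ : γ w = σ w := by
      by_contra hne'
      exact hne (congrArg F (lineMap_injective ℝ hne' hwz))
    simpa only [F, hγσ, lineMap_same_apply] using h w w hγσ

def HasOffSegmentPoint (u v : E) : Prop :=
  ∃ C ∈ Ioo (0 : ℝ) 1, ∃ p : E,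
    p ≠ lineMap u v C ∧ dist u p = C * dist u v ∧ dist p v = (1 - C) * dist u v

theorem IsGeodesic.hasOffSegmentPoint (hγ : IsGeodesic u v γ) (hσ : IsGeodesic u v σ)
    (hne : γ ≠ σ) : HasOffSegmentPoint u v := by
  obtain ⟨s, hs, hγσ⟩ := hγ.exists_apply_ne hσ hne
  have of_apply_ne {τ : unitInterval → E} (hτ : IsGeodesic u v τ)
      (hτs : τ s ≠ AffineMap.lineMap u v (s : ℝ)) : HasOffSegmentPoint u v :=
    ⟨s, hs, τ s, hτs, hτ.dist_left s, hτ.dist_right s⟩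
  by_cases hγs : γ s = AffineMap.lineMap u v (s : ℝ)
  · exact of_apply_ne hσ (hγs ▸ hγσ.symm)
  · exact of_apply_ne hγ hγs

theorem hasOffSegmentPoint_of_forall_norm_eq_one
    (h : ∀ x : E, ‖x‖ = 1 → ∃ C ∈ Ioo (0 : ℝ) 1, ∃ y : E, y ≠ C • x ∧ ‖y‖ = C ∧ ‖x - y‖ = 1 - C)
    (huv : u ≠ v) : HasOffSegmentPoint u v := by
  set d := dist u v
  have hd : 0 < d := dist_pos.2 huv
  have hdu : ‖v - u‖ = d := by rw [← dist_eq_norm, dist_comm]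
  obtain ⟨C, hC, y, hyx, hy, hxy⟩ := h (d⁻¹ • (v - u)) (by
    rw [norm_smul, norm_inv, Real.norm_of_nonneg hd.le, hdu, inv_mul_cancel₀ hd.ne'])
  refine ⟨C, hC, u + d • y, fun hp => hyx ?_, ?_, ?_⟩
  · rw [lineMap_apply_module', add_comm u, add_left_inj] at hp
    rw [smul_comm, ← hp, smul_smul, inv_mul_cancel₀ hd.ne', one_smul]
  · rw [dist_self_add_right, norm_smul, Real.norm_of_nonneg hd.le, hy, mul_comm]
  · have : v - (u + d • y) = d • (d⁻¹ • (v - u) - y) := by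
      rw [smul_sub, smul_smul, mul_inv_cancel₀ hd.ne', one_smul, sub_sub]
    rw [dist_comm, dist_eq_norm, this, norm_smul, Real.norm_of_nonneg hd.le, hxy, mul_comm]

end NormedSpace

theorem statement4 {X : Type*} [NormedAddCommGroup X] [NormedSpace ℝ X] :
    List.TFAE [
      -- (1) X is multigeodesic
      Multigeodesic X,
      -- (2) between any two distinct points there is an uncountable family of
      -- pairwise-disjoint geodesics
      ∀ u v : X, u ≠ v → ∃ S : Set (unitInterval → X), ¬ S.Countable ∧
        (∀ γ ∈ S, IsGeodesic u v γ) ∧ S.Pairwise (DisjointGeodesics u v),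
      -- (3) for every unit vector x there is an intermediate point other than C • x
      ∀ x : X, ‖x‖ = 1 → ∃ C ∈ Set.Ioo (0 : ℝ) 1, ∃ y : X, y ≠ C • x ∧
        ‖y‖ = C ∧ ‖x - y‖ = 1 - C] := by
  tfae_have 2 → 1 := fun h2 u v huv => by
    obtain ⟨S, hS, hgeo, -⟩ := h2 u v huv
    obtain ⟨γ, hγ, σ, hσ, hne⟩ := not_subsingleton_iff.1 fun h => hS h.countable
    exact ⟨γ, σ, hgeo γ hγ, hgeo σ hσ, hne⟩
  tfae_have 1 → 3 := fun h1 x hx => by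
    obtain ⟨γ, σ, hγ, hσ, hne⟩ := h1 0 x (ne_of_apply_ne norm (by simp [hx]))
    obtain ⟨C, hC, y, hy, h0y, hyx⟩ := hγ.hasOffSegmentPoint hσ hne
    have hx' : dist 0 x = 1 := by rw [dist_zero_left, hx]
    rw [hx', mul_one, dist_zero_left] at h0y
    rw [hx', mul_one, dist_comm, dist_eq_norm] at hyx
    exact ⟨C, hC, y, by simpa [lineMap_apply_module] using hy, h0y, hyx⟩
  tfae_have 3 → 2 := fun h3 u v huv => by
    obtain ⟨C, hC, p, hp, hup, hpv⟩ := hasOffSegmentPoint_of_forall_norm_eq_one h3 huv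
    exact (disjointGeodesics_lineMap_brokenLine hC hup hpv hp huv).exists_uncountable_pairwise
      (isGeodesic_lineMap u v) (isGeodesic_brokenLine hC hup hpv) huv
  tfae_finish
end

section
/- Let (X, d) be a multigeodesic metric space. Then every geodesic γ : [0,1] → X between distinct points branches at every time t ∈ (0,1); that is, for every t ∈ (0,1) there exists a geodesic σ : [0,1] → X from γ(0) to γ(1) such that inf{ s ∈ (0,1) : σ(s) ≠ γ(s) } = t. -/
open Set Filter Topology

lemma LipschitzOnWith.congr {α β : Type*} [PseudoEMetricSpace α] [PseudoEMetricSpace β]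
    {K : NNReal} {f g : α → β} {s : Set α} (hf : LipschitzOnWith K f s) (hfg : EqOn f g s) :
    LipschitzOnWith K g s :=
  fun x hx y hy => by rw [← hfg hx, ← hfg hy]; exact hf hx hy

lemma LipschitzOnWith.union_of_le_of_le {X : Type*} [PseudoMetricSpace X] {K : NNReal}
    {f : ℝ → X} {s t : Set ℝ} {b : ℝ} (hs : LipschitzOnWith K f s) (ht : LipschitzOnWith K f t)
    (hbs : b ∈ s) (hbt : b ∈ t) (hs_le : ∀ x ∈ s, x ≤ b) (ht_ge : ∀ y ∈ t, b ≤ y) :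
    LipschitzOnWith K f (s ∪ t) := by
  have across : ∀ x ∈ s, ∀ y ∈ t, dist (f x) (f y) ≤ K * dist x y := fun x hx y hy => by
    have hxb := hs_le x hx
    have hby := ht_ge y hy
    calc dist (f x) (f y) ≤ dist (f x) (f b) + dist (f b) (f y) := dist_triangle _ _ _
      _ ≤ K * dist x b + K * dist b y :=
        add_le_add (hs.dist_le_mul x hx b hbs) (ht.dist_le_mul b hbt y hy)
      _ = K * dist x y := by
        rw [Real.dist_eq, Real.dist_eq, Real.dist_eq, abs_of_nonpos (by linarith),
          abs_of_nonpos (by linarith), abs_of_nonpos (by linarith)]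
        ring
  refine LipschitzOnWith.of_dist_le_mul fun x hx y hy => ?_
  rcases hx with hx | hx <;> rcases hy with hy | hy
  · exact hs.dist_le_mul x hx y hy
  · exact across x hx y hy
  · rw [dist_comm, dist_comm x]; exact across y hy x hx
  · exact ht.dist_le_mul x hx y hy

lemma exists_seq_strictAnti_tendsto_of_lt {t b : ℝ} (htb : t < b) :
    ∃ a : ℕ → ℝ, StrictAnti a ∧ a 0 = b ∧ Tendsto a atTop (𝓝 t) := by
  refine ⟨fun n => t + (b - t) * (1 / 2) ^ n, strictAnti_nat_of_succ_lt fun n => ?_, by simp, ?_⟩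
  · have : (0 : ℝ) < (b - t) * (1 / 2) ^ n := by have := sub_pos.2 htb; positivity
    simp only [pow_succ]
    linarith
  · have h := tendsto_pow_atTop_nhds_zero_of_lt_one (by norm_num) (by norm_num : (1 / 2 : ℝ) < 1)
    simpa using tendsto_const_nhds.add (h.const_mul (b - t))

lemma StrictAnti.lt_of_tendsto {α : Type*} [LinearOrder α] [TopologicalSpace α]
    [OrderClosedTopology α] {a : ℕ → α} {t : α} (ha : StrictAnti a)
    (hat : Tendsto a atTop (𝓝 t)) (n : ℕ) : t < a n :=
  (ha.antitone.le_of_tendsto hat (n + 1)).trans_lt (ha n.lt_succ_self)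

section

variable {X : Type*}

noncomputable def reparam (a b : ℝ) (τ : unitInterval → X) (x : ℝ) : X :=
  IccExtend zero_le_one τ ((x - a) / (b - a))

section reparam

variable {a b : ℝ} {τ : unitInterval → X}

lemma reparam_left : reparam a b τ a = τ 0 := by
  simp [reparam, IccExtend_left]

lemma reparam_right (hab : a < b) : reparam a b τ b = τ 1 := by
  simp [reparam, div_self (sub_pos.2 hab).ne', IccExtend_right]

lemma reparam_lineMap (hab : a < b) (r : unitInterval) :
    reparam a b τ (a + r * (b - a)) = τ r := by
  simp [reparam, mul_div_assoc, div_self (sub_pos.2 hab).ne']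

lemma exists_mem_Ioo_reparam_ne {g : ℝ → X} (hab : a < b) (h0 : τ 0 = g a) (h1 : τ 1 = g b)
    (hτ : τ ≠ fun r : unitInterval => g (a + r * (b - a))) :
    ∃ x ∈ Ioo a b, reparam a b τ x ≠ g x := by
  obtain ⟨r, hr⟩ := Function.ne_iff.1 hτ
  have hr0 : (r : ℝ) ≠ 0 := fun h => hr (by simp [show r = 0 from Subtype.ext h, h0])
  have hr1 : (r : ℝ) ≠ 1 := fun h => hr (by simp [show r = 1 from Subtype.ext h, h1])
  have hpos : 0 < (r : ℝ) := lt_of_le_of_ne r.2.1 (Ne.symm hr0)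
  have hlt : (r : ℝ) < 1 := lt_of_le_of_ne r.2.2 hr1
  refine ⟨a + r * (b - a), ⟨by nlinarith, by nlinarith⟩, ?_⟩
  rwa [reparam_lineMap hab]

end reparam

open Classical in
/-- The curve equal to `c n` on `(a (n + 1), a n]` for every `n`, and to `g` below all the
`a n`. -/
noncomputable def spliceSeq (a : ℕ → ℝ) (g : ℝ → X) (c : ℕ → ℝ → X) (x : ℝ) : X :=
  if h : ∃ n, a (n + 1) < x then c (Nat.find h) x else g x

section spliceSeq

variable {a : ℕ → ℝ} {g : ℝ → X} {c : ℕ → ℝ → X} {x : ℝ}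

lemma spliceSeq_of_forall_le (hx : ∀ n, x ≤ a (n + 1)) : spliceSeq a g c x = g x :=
  dif_neg (by simpa using hx)

lemma spliceSeq_of_mem_Ioc (ha : Antitone a) {n : ℕ} (hx : x ∈ Ioc (a (n + 1)) (a n)) :
    spliceSeq a g c x = c n x := by
  have h : ∃ m, a (m + 1) < x := ⟨n, hx.1⟩
  rw [spliceSeq, dif_pos h, (Nat.find_eq_iff h).2 ⟨hx.1, fun m hm => ?_⟩]
  exact not_lt.2 (hx.2.trans (ha (Nat.succ_le_of_lt hm)))

lemma eqOn_spliceSeq_Icc (ha : StrictAnti a) (hc0 : ∀ n, c n (a (n + 1)) = g (a (n + 1)))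
    (hc1 : ∀ n, c n (a n) = g (a n)) (n : ℕ) :
    EqOn (spliceSeq a g c) (c n) (Icc (a (n + 1)) (a n)) := by
  intro x hx
  rcases hx.1.eq_or_lt with rfl | hlt
  · rw [spliceSeq_of_mem_Ioc ha.antitone ⟨ha (Nat.lt_succ_self _), le_rfl⟩, hc1, hc0]
  · exact spliceSeq_of_mem_Ioc ha.antitone ⟨hlt, hx.2⟩

end spliceSeq

variable [MetricSpace X]

lemma IsGeodesic.lipschitzWith {u v : X} {γ : unitInterval → X} (hγ : IsGeodesic u v γ) :
    LipschitzWith (nndist u v) γ :=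
  LipschitzWith.of_dist_le_mul fun s s' => by
    rw [hγ.2.2, coe_nndist, Subtype.dist_eq, Real.dist_eq, mul_comm]

lemma isGeodesic_of_lipschitzWith {u v : X} {γ : unitInterval → X} (h0 : γ 0 = u)
    (h1 : γ 1 = v) (hγ : LipschitzWith (nndist u v) γ) : IsGeodesic u v γ := by
  subst h0 h1
  set D := dist (γ 0) (γ 1)
  have hle : ∀ r r' : unitInterval, dist (γ r) (γ r') ≤ |(r : ℝ) - r'| * D := fun r r' => by
    simpa [mul_comm, Subtype.dist_eq, Real.dist_eq] using hγ.dist_le_mul r r'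
  refine ⟨rfl, rfl, fun s s' => ?_⟩
  wlog hss : (s : ℝ) ≤ s' generalizing s s'
  · rw [dist_comm, abs_sub_comm]; exact this s' s (le_of_not_ge hss)
  have h0s : dist (γ 0) (γ s) ≤ s * D := by simpa [abs_of_nonneg s.2.1] using hle 0 s
  have hs'1 : dist (γ s') (γ 1) ≤ (1 - s') * D := by
    simpa [abs_of_nonpos (sub_nonpos.2 s'.2.2), neg_sub] using hle s' 1
  refine (hle s s').antisymm ?_
  calc |(s : ℝ) - s'| * D = D - s * D - (1 - s') * D := by
        rw [abs_of_nonpos (sub_nonpos.2 hss)]; ring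
    _ ≤ dist (γ s) (γ s') := by linarith [dist_triangle4 (γ 0) (γ s) (γ s') (γ 1)]

lemma IsGeodesic.dist_IccExtend {u v : X} {γ : unitInterval → X} (hγ : IsGeodesic u v γ)
    {x y : ℝ} (hx : x ∈ unitInterval) (hy : y ∈ unitInterval) :
    dist (IccExtend zero_le_one γ x) (IccExtend zero_le_one γ y) = |x - y| * dist u v := by
  rw [IccExtend_of_mem _ _ hx, IccExtend_of_mem _ _ hy, hγ.2.2]

lemma IsGeodesic.lipschitzWith_IccExtend {u v : X} {γ : unitInterval → X}
    (hγ : IsGeodesic u v γ) : LipschitzWith (nndist u v) (IccExtend zero_le_one γ) := by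
  rw [← mul_one (nndist u v)]
  exact hγ.lipschitzWith.comp (LipschitzWith.projIcc zero_le_one)

lemma IsGeodesic.lipschitzWith_reparam {p q : X} {τ : unitInterval → X} {a b : ℝ} {K : NNReal}
    (hτ : IsGeodesic p q τ) (hab : a < b) (hK : dist p q = K * (b - a)) :
    LipschitzWith K (reparam a b τ) := by
  refine LipschitzWith.of_dist_le_mul fun x y => ?_
  have hba : 0 < b - a := sub_pos.2 hab
  calc dist (reparam a b τ x) (reparam a b τ y)
      ≤ nndist p q * dist ((x - a) / (b - a)) ((y - a) / (b - a)) :=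
        hτ.lipschitzWith_IccExtend.dist_le_mul _ _
    _ = K * dist x y := by
        rw [coe_nndist, hK, Real.dist_eq, Real.dist_eq, ← sub_div, sub_sub_sub_cancel_right,
          abs_div, abs_of_pos hba]
        field_simp

lemma lipschitzOnWith_spliceSeq {a : ℕ → ℝ} {t : ℝ} {g : ℝ → X} {c : ℕ → ℝ → X} {K : NNReal}
    (ha : StrictAnti a) (hat : Tendsto a atTop (𝓝 t)) (hg : LipschitzWith K g)
    (hc : ∀ n, LipschitzWith K (c n)) (hc0 : ∀ n, c n (a (n + 1)) = g (a (n + 1)))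
    (hc1 : ∀ n, c n (a n) = g (a n)) :
    LipschitzOnWith K (spliceSeq a g c) (Iic (a 0)) := by
  set F := spliceSeq a g c
  have hta := ha.lt_of_tendsto hat
  have hpiece : ∀ n, LipschitzOnWith K F (Icc (a (n + 1)) (a n)) := fun n =>
    (hc n).lipschitzOnWith.congr (eqOn_spliceSeq_Icc ha hc0 hc1 n).symm
  have htail : ∀ n, LipschitzOnWith K F (Icc (a n) (a 0)) := by
    intro n
    induction n with
    | zero => exact (hpiece 0).mono (Icc_subset_Icc_left (ha.antitone (Nat.zero_le 1)))
    | succ n ih =>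
      rw [← Icc_union_Icc_eq_Icc (ha.antitone n.le_succ) (ha.antitone n.zero_le)]
      exact (hpiece n).union_of_le_of_le ih ⟨ha.antitone n.le_succ, le_rfl⟩
        ⟨le_rfl, ha.antitone n.zero_le⟩ (fun x hx => hx.2) (fun y hy => hy.1)
  have hhead : ∀ n, LipschitzOnWith K F (insert (a n) (Iic t)) := by
    refine fun n => hg.lipschitzOnWith.congr fun x hx => ?_
    rcases hx with rfl | hx
    · exact ((spliceSeq_of_mem_Ioc ha.antitone ⟨ha n.lt_succ_self, le_rfl⟩).trans (hc1 n)).symm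
    · exact (spliceSeq_of_forall_le fun m => hx.trans (hta _).le).symm
  have hcover : ∀ x ∈ Iic (a 0), ∀ᶠ n in atTop, x ∈ insert (a n) (Iic t) ∪ Icc (a n) (a 0) := by
    intro x hx
    rcases le_or_gt x t with hxt | hxt
    · exact Eventually.of_forall fun n => Or.inl (Or.inr hxt)
    · exact (hat.eventually (Iio_mem_nhds hxt)).mono fun n hn => Or.inr ⟨hn.le, hx⟩
  refine LipschitzOnWith.of_dist_le_mul fun x hx y hy => ?_
  obtain ⟨n, hxn, hyn⟩ := ((hcover x hx).and (hcover y hy)).exists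
  have hS := (hhead n).union_of_le_of_le (htail n) (mem_insert _ _)
    ⟨le_rfl, ha.antitone n.zero_le⟩
    (fun z hz => hz.elim (fun h => h.le) fun h => h.trans (hta n).le) (fun y hy => hy.1)
  exact hS.dist_le_mul x hxn y hyn

lemma Multigeodesic.exists_isGeodesic_ne (hX : Multigeodesic X) {u v : X} (huv : u ≠ v)
    (γ : unitInterval → X) : ∃ τ, IsGeodesic u v τ ∧ τ ≠ γ := by
  obtain ⟨τ₁, τ₂, h₁, h₂, hne⟩ := hX u v huv
  by_cases h : τ₁ = γ
  · exact ⟨τ₂, h₂, fun h' => hne (h.trans h'.symm)⟩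
  · exact ⟨τ₁, h₁, h⟩

lemma Multigeodesic.exists_isGeodesic_branching (hX : Multigeodesic X) {u v : X} (huv : u ≠ v)
    {γ : unitInterval → X} (hγ : IsGeodesic u v γ) {t : ℝ} (ht : 0 ≤ t) {a : ℕ → ℝ}
    (ha : StrictAnti a) (ha0 : a 0 = 1) (hat : Tendsto a atTop (𝓝 t)) :
    ∃ σ, IsGeodesic u v σ ∧ (∀ s : unitInterval, (s : ℝ) ≤ t → σ s = γ s) ∧
      ∀ n, ∃ s : unitInterval, (s : ℝ) < a n ∧ σ s ≠ γ s := by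
  set g := IccExtend zero_le_one γ
  have hta := ha.lt_of_tendsto hat
  have ha_mem : ∀ n, a n ∈ unitInterval := fun n =>
    ⟨ht.trans (hta n).le, ha0 ▸ ha.antitone n.zero_le⟩
  have hdist : ∀ n, dist (g (a (n + 1))) (g (a n)) = nndist u v * (a n - a (n + 1)) := fun n => by
    rw [hγ.dist_IccExtend (ha_mem _) (ha_mem _), abs_sub_comm,
      abs_of_pos (sub_pos.2 (ha n.lt_succ_self)), coe_nndist, mul_comm]
  have hne : ∀ n, g (a (n + 1)) ≠ g (a n) := fun n h => by
    have := hdist n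
    rw [h, dist_self, coe_nndist, eq_comm] at this
    exact (mul_ne_zero (dist_ne_zero.2 huv) (sub_pos.2 (ha n.lt_succ_self)).ne') this
  choose τ hτ hτne using fun n =>
    hX.exists_isGeodesic_ne (hne n) fun r : unitInterval => g (a (n + 1) + r * (a n - a (n + 1)))
  set c := fun n => reparam (a (n + 1)) (a n) (τ n)
  have hc0 : ∀ n, c n (a (n + 1)) = g (a (n + 1)) := fun n => reparam_left.trans (hτ n).1
  have hc1 : ∀ n, c n (a n) = g (a n) := fun n =>
    (reparam_right (ha n.lt_succ_self)).trans (hτ n).2.1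
  have hF := lipschitzOnWith_spliceSeq ha hat hγ.lipschitzWith_IccExtend
    (fun n => (hτ n).lipschitzWith_reparam (ha n.lt_succ_self) (hdist n)) hc0 hc1
  have hF_le : ∀ s : unitInterval, (s : ℝ) ≤ t → spliceSeq a g c s = γ s := fun s hs =>
    (spliceSeq_of_forall_le fun n => hs.trans (hta _).le).trans (IccExtend_val _ _ _)
  refine ⟨fun s => spliceSeq a g c s, isGeodesic_of_lipschitzWith ?_ ?_ ?_, hF_le, fun n => ?_⟩
  · exact (hF_le 0 ht).trans hγ.1
  · rw [Icc.coe_one, ← ha0, spliceSeq_of_mem_Ioc ha.antitone ⟨ha zero_lt_one, le_rfl⟩, hc1, ha0]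
    exact (IccExtend_right _ γ).trans hγ.2.1
  · exact (hF.mono fun x hx => ha0 ▸ hx.2).to_restrict
  · obtain ⟨x, hx, hxne⟩ :=
      exists_mem_Ioo_reparam_ne (ha n.lt_succ_self) (hτ n).1 (hτ n).2.1 (hτne n)
    have hx_mem : x ∈ unitInterval := ⟨(ha_mem _).1.trans hx.1.le, hx.2.le.trans (ha_mem n).2⟩
    refine ⟨⟨x, hx_mem⟩, hx.2, ?_⟩
    change spliceSeq a g c x ≠ γ ⟨x, hx_mem⟩
    rwa [eqOn_spliceSeq_Icc ha hc0 hc1 n (Ioo_subset_Icc_self hx), ← IccExtend_of_mem _ γ hx_mem]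

end

theorem statement15 {X : Type*} [MetricSpace X] (hX : Multigeodesic X) :
    ∀ γ : unitInterval → X, IsGeodesic (γ 0) (γ 1) γ → γ 0 ≠ γ 1 →
      ∀ t ∈ Set.Ioo (0 : ℝ) 1,
        ∃ σ : unitInterval → X, IsGeodesic (γ 0) (γ 1) σ ∧
          sInf (Subtype.val ''
            {s : unitInterval | 0 < (s : ℝ) ∧ (s : ℝ) < 1 ∧ σ s ≠ γ s}) = t := by
  intro γ hγ hne t ht
  obtain ⟨a, ha, ha0, hat⟩ := exists_seq_strictAnti_tendsto_of_lt ht.2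
  obtain ⟨σ, hσ, hσ_le, hσ_ne⟩ := hX.exists_isGeodesic_branching hne hγ ht.1.le ha ha0 hat
  have hlt : ∀ s : unitInterval, σ s ≠ γ s → t < s := fun s hs =>
    not_le.1 fun h => hs (hσ_le s h)
  set S := Subtype.val '' {s : unitInterval | 0 < (s : ℝ) ∧ (s : ℝ) < 1 ∧ σ s ≠ γ s}
  have hmem : ∀ n, ∃ x ∈ S, x < a n := fun n => by
    obtain ⟨s, hsa, hs⟩ := hσ_ne n
    have hs1 : (s : ℝ) < 1 := hsa.trans_le (ha0 ▸ ha.antitone n.zero_le)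
    exact ⟨s, ⟨s, ⟨ht.1.trans (hlt s hs), hs1, hs⟩, rfl⟩, hsa⟩
  refine ⟨σ, hσ, csInf_eq_of_forall_ge_of_forall_gt_exists_lt ?_ ?_ fun w hw => ?_⟩
  · obtain ⟨x, hx, -⟩ := hmem 0
    exact ⟨x, hx⟩
  · rintro _ ⟨s, ⟨-, -, hs⟩, rfl⟩
    exact (hlt s hs).le
  · obtain ⟨n, hn⟩ := (hat.eventually (Iio_mem_nhds hw)).exists
    obtain ⟨x, hx, hxa⟩ := hmem n
    exact ⟨x, hx, hxa.trans hn⟩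
end
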